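/- In the Eisenberg–Noe setting (α_x = α_L = 1) under the regularity assumption (p̄_i > 0 and Σ_{j=1}^n π_{ij} < 1 for every i ≤ n), let X : Ω → ℝⁿ₊ be an integrable random endowment vector and let U be a random variable uniformly distributed on [0,1] on the same probability space such that the conditional expectation 𝔼[X | σ(U)] is almost surely a nondecreasing function of U in every component (i.e., is comonotonic). Then for every bank i ≤ n: 𝔼[V_i(X)] ≤ 𝔼[V_i(𝔼[X | σ(U)])] and 𝔼[p_i(X)] ≤ 𝔼[p_i(𝔼[X | σ(U)])]. -/

import Mathlib

open Matrix BigOperators MeasureTheory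

noncomputable section

/-- Total liabilities `p̄_i = Σ_{j=1}^{n+1} L_{ij}`. -/
def pbar {n : ℕ} (L : Matrix (Fin n) (Fin (n + 1)) ℝ) (i : Fin n) : ℝ :=
  ∑ j, L i j

/-- Relative liabilities `π_{ij} = L_{ij} / p̄_i` if `p̄_i > 0`, else `0`. -/
def relLiab {n : ℕ} (L : Matrix (Fin n) (Fin (n + 1)) ℝ) (i j : Fin n) : ℝ :=
  if 0 < pbar L i then L i j.castSucc / pbar L i else 0

/-- `p` is the greatest clearing payment vector for endowments `x` in the Eisenberg–Noe
setting: the greatest fixed point of `p ↦ p̄ ∧ (x + Πᵀ p)` on `[0, p̄]`. -/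
def IsGreatestClearingPayment {n : ℕ} (L : Matrix (Fin n) (Fin (n + 1)) ℝ)
    (x p : Fin n → ℝ) : Prop :=
  IsGreatest {q : Fin n → ℝ | (∀ i, 0 ≤ q i ∧ q i ≤ pbar L i) ∧
    ∀ i, q i = min (pbar L i) (x i + ∑ j, relLiab L j i * q j)} p

/-!
The greatest clearing vector `c(x)` is the limit of the decreasing Picard iteration of
`Φ_x(q) = p̄ ∧ (x + Πᵀ q)` started at `p̄`; as an infimum of continuous functions of `x` it is
measurable and upper semicontinuous. By Knaster–Tarski every nonnegative `q ≤ Φ_x(q)` lies below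
`c(x)`, and since `Φ` is jointly concave in `(x, q)` this makes `c` concave on the nonnegative
orthant. Conditional Jensen gives `𝔼[c(X) | σ(U)] ≤ c(𝔼[X | σ(U)])` a.s., and taking expectations
yields the payment inequality. The value inequality follows because `V` is affine in `(x, p)`
with nonnegative coefficients on `p`, and `𝔼[X] = 𝔼[𝔼[X | σ(U)]]`.
-/

section

variable {Ω : Type*} {m mΩ : MeasurableSpace Ω} {μ : Measure Ω}

lemma ae_eq_condExp_of_forall_eval_eq {ι : Type*} [Fintype ι] {E : Type*}
    [NormedAddCommGroup E] [NormedSpace ℝ E] [CompleteSpace E] {f g : Ω → ι → E}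
    (hf : Integrable f μ) (hg : ∀ i, (fun ω => g ω i) = μ[fun ω => f ω i | m]) :
    g =ᵐ[μ] μ[f | m] := by
  filter_upwards [ae_all_iff.2 fun i =>
    (ContinuousLinearMap.proj (R := ℝ) (φ := fun _ : ι => E) i).comp_condExp_comm hf (m := m)]
    with ω hω
  exact funext fun i => (congrFun (hg i) ω).trans (hω i).symm

lemma integral_add_sum_mul_sub_le [IsProbabilityMeasure μ] {ι : Type*} [Fintype ι]
    {f f' : Ω → ℝ} {g g' : ι → Ω → ℝ} {c : ι → ℝ} (d : ℝ) (hf : Integrable f μ)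
    (hf' : Integrable f' μ) (hg : ∀ j, Integrable (g j) μ) (hg' : ∀ j, Integrable (g' j) μ)
    (hff' : ∫ ω, f ω ∂μ = ∫ ω, f' ω ∂μ) (hgg' : ∀ j, ∫ ω, g j ω ∂μ ≤ ∫ ω, g' j ω ∂μ)
    (hc : ∀ j, 0 ≤ c j) :
    ∫ ω, (f ω + ∑ j, c j * g j ω - d) ∂μ ≤ ∫ ω, (f' ω + ∑ j, c j * g' j ω - d) ∂μ := by
  have hexpand : ∀ {f : Ω → ℝ} {g : ι → Ω → ℝ}, Integrable f μ → (∀ j, Integrable (g j) μ) →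
      ∫ ω, (f ω + ∑ j, c j * g j ω - d) ∂μ = ∫ ω, f ω ∂μ + ∑ j, c j * ∫ ω, g j ω ∂μ - d := by
    intro f g hf hg
    have hsum : Integrable (fun ω => ∑ j, c j * g j ω) μ :=
      integrable_finsetSum _ fun j _ => (hg j).const_mul _
    have hadd : Integrable (fun ω => f ω + ∑ j, c j * g j ω) μ := hf.add hsum
    rw [integral_sub hadd (integrable_const d), integral_add hf hsum,
      integral_finsetSum _ fun j _ => (hg j).const_mul _, integral_const, probReal_univ, one_smul]
    simp only [integral_const_mul]
  rw [hexpand hf hg, hexpand hf' hg', hff']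
  refine sub_le_sub_right (add_le_add_right ?_ _) d
  exact Finset.sum_le_sum fun j _ => mul_le_mul_of_nonneg_left (hgg' j) (hc j)

end

namespace EisenbergNoe

variable {n : ℕ} {L : Matrix (Fin n) (Fin (n + 1)) ℝ}

variable (L) in
def clearingMap (x q : Fin n → ℝ) : Fin n → ℝ :=
  fun i => min (pbar L i) (x i + ∑ j, relLiab L j i * q j)

lemma pbar_nonneg (hL : ∀ i j, 0 ≤ L i j) : 0 ≤ pbar L :=
  fun i => Finset.sum_nonneg fun j _ => hL i j

lemma relLiab_nonneg (hL : ∀ i j, 0 ≤ L i j) (i j : Fin n) : 0 ≤ relLiab L i j := by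
  unfold relLiab
  split_ifs with h
  · exact div_nonneg (hL _ _) h.le
  · exact le_rfl

lemma clearingMap_le_pbar (x q : Fin n → ℝ) : clearingMap L x q ≤ pbar L :=
  fun _ => min_le_left _ _

lemma clearingMap_nonneg (hL : ∀ i j, 0 ≤ L i j) {x q : Fin n → ℝ} (hx : 0 ≤ x) (hq : 0 ≤ q) :
    0 ≤ clearingMap L x q := fun i =>
  le_min (pbar_nonneg hL i) <| add_nonneg (hx i) <|
    Finset.sum_nonneg fun j _ => mul_nonneg (relLiab_nonneg hL j i) (hq j)

lemma monotone_clearingMap (hL : ∀ i j, 0 ≤ L i j) (x : Fin n → ℝ) :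
    Monotone (clearingMap L x) := fun _ _ h i =>
  min_le_min_left _ <| add_le_add_right
    (Finset.sum_le_sum fun j _ => mul_le_mul_of_nonneg_left (h j) (relLiab_nonneg hL j i)) _

variable (L) in
lemma continuous_clearingMap :
    Continuous fun xq : (Fin n → ℝ) × (Fin n → ℝ) => clearingMap L xq.1 xq.2 := by
  unfold clearingMap
  fun_prop

lemma isGreatestClearingPayment_iff {x p : Fin n → ℝ} :
    IsGreatestClearingPayment L x p ↔
      IsGreatest {q | 0 ≤ q ∧ Function.IsFixedPt (clearingMap L x) q} p := by
  unfold IsGreatestClearingPayment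
  congr! 1
  ext q
  simp only [Set.mem_ofPred_eq, Function.IsFixedPt, funext_iff, clearingMap, Pi.le_def,
    Pi.zero_apply]
  constructor
  · rintro ⟨hbounds, hfix⟩
    exact ⟨fun i => (hbounds i).1, fun i => (hfix i).symm⟩
  · rintro ⟨hnonneg, hfix⟩
    exact ⟨fun i => ⟨hnonneg i, hfix i ▸ min_le_left _ _⟩, fun i => (hfix i).symm⟩

/-- Knaster–Tarski, via the increasing Picard iteration started at `r`. -/
lemma IsGreatestClearingPayment.le_of_le_clearingMap (hL : ∀ i j, 0 ≤ L i j)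
    {x p r : Fin n → ℝ} (hp : IsGreatestClearingPayment L x p) (hr : 0 ≤ r)
    (hrx : r ≤ clearingMap L x r) : r ≤ p := by
  set s : ℕ → Fin n → ℝ := fun k => (clearingMap L x)^[k] r
  have hs_mono : Monotone s := (monotone_clearingMap hL x).monotone_iterate_of_le_map hrx
  have hs_bdd : BddAbove (Set.range s) := by
    refine ⟨pbar L, ?_⟩
    rintro _ ⟨k, rfl⟩
    cases k with
    | zero => exact hrx.trans (clearingMap_le_pbar x r)
    | succ k => exact (Function.iterate_succ_apply' _ _ _).trans_le (clearingMap_le_pbar x _)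
  have hlim := tendsto_atTop_ciSup hs_mono hs_bdd
  have hfix : Function.IsFixedPt (clearingMap L x) (⨆ k, s k) :=
    isFixedPt_of_tendsto_iterate hlim
      ((continuous_clearingMap L).comp (Continuous.prodMk_right x)).continuousAt
  have hr_le : r ≤ ⨆ k, s k := le_ciSup hs_bdd 0
  exact hr_le.trans ((isGreatestClearingPayment_iff.1 hp).2 ⟨hr.trans hr_le, hfix⟩)

variable (L) in
def clearingVector (x : Fin n → ℝ) : Fin n → ℝ :=
  ⨅ k, (clearingMap L x)^[k] (pbar L)

lemma isGreatestClearingPayment_clearingVector (hL : ∀ i j, 0 ≤ L i j) {x : Fin n → ℝ}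
    (hx : 0 ≤ x) : IsGreatestClearingPayment L x (clearingVector L x) := by
  set s : ℕ → Fin n → ℝ := fun k => (clearingMap L x)^[k] (pbar L)
  have hmono := monotone_clearingMap hL x
  have hs_anti : Antitone s := hmono.antitone_iterate_of_map_le (clearingMap_le_pbar x _)
  have hs_nonneg : ∀ k, 0 ≤ s k := fun k =>
    Function.Iterate.rec (0 ≤ ·) (pbar_nonneg hL) (fun _ => clearingMap_nonneg hL hx) k
  have hs_bdd : BddBelow (Set.range s) := ⟨0, by rintro _ ⟨k, rfl⟩; exact hs_nonneg k⟩
  have hlim := tendsto_atTop_ciInf hs_anti hs_bdd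
  refine isGreatestClearingPayment_iff.2 ⟨⟨le_ciInf hs_nonneg, ?_⟩, ?_⟩
  · exact isFixedPt_of_tendsto_iterate hlim
      ((continuous_clearingMap L).comp (Continuous.prodMk_right x)).continuousAt
  · rintro q ⟨-, hq⟩
    refine le_ciInf fun k => ?_
    calc q = (clearingMap L x)^[k] q := (hq.iterate k).symm
      _ ≤ s k := hmono.iterate k <| hq ▸ clearingMap_le_pbar x q

lemma IsGreatestClearingPayment.eq_clearingVector (hL : ∀ i j, 0 ≤ L i j) {x p : Fin n → ℝ}
    (hx : 0 ≤ x) (hp : IsGreatestClearingPayment L x p) : p = clearingVector L x :=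
  hp.unique (isGreatestClearingPayment_clearingVector hL hx)

lemma smul_add_smul_clearingMap_le {a b : ℝ} (ha : 0 ≤ a) (hb : 0 ≤ b) (hab : a + b = 1)
    (x y q r : Fin n → ℝ) :
    a • clearingMap L x q + b • clearingMap L y r ≤
      clearingMap L (a • x + b • y) (a • q + b • r) := by
  intro i
  simp only [clearingMap, Pi.add_apply, Pi.smul_apply, smul_eq_mul]
  have hsum : ∑ j, relLiab L j i * (a * q j + b * r j)
      = a * ∑ j, relLiab L j i * q j + b * ∑ j, relLiab L j i * r j := by
    simp only [Finset.mul_sum, ← Finset.sum_add_distrib]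
    exact Finset.sum_congr rfl fun j _ => by ring
  have hpbar : a * pbar L i + b * pbar L i = pbar L i := by rw [← add_mul, hab, one_mul]
  rw [hsum]
  set u := x i + ∑ j, relLiab L j i * q j
  set v := y i + ∑ j, relLiab L j i * r j
  refine le_min ?_ ?_
  · linarith [mul_le_mul_of_nonneg_left (min_le_left (pbar L i) u) ha,
      mul_le_mul_of_nonneg_left (min_le_left (pbar L i) v) hb]
  · linarith [mul_le_mul_of_nonneg_left (min_le_right (pbar L i) u) ha,
      mul_le_mul_of_nonneg_left (min_le_right (pbar L i) v) hb]

/-- Knaster–Tarski turns the joint concavity of the clearing map into concavity of its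
greatest fixed point. -/
lemma concaveOn_clearingVector (hL : ∀ i j, 0 ≤ L i j) :
    ConcaveOn ℝ (Set.Ici 0) (clearingVector L) := by
  refine ⟨convex_Ici 0, fun x hx y hy a b ha hb hab => ?_⟩
  obtain ⟨⟨hcx_nonneg, hcx_fix⟩, -⟩ :=
    isGreatestClearingPayment_iff.1 (isGreatestClearingPayment_clearingVector hL hx)
  obtain ⟨⟨hcy_nonneg, hcy_fix⟩, -⟩ :=
    isGreatestClearingPayment_iff.1 (isGreatestClearingPayment_clearingVector hL hy)
  have hz : (0 : Fin n → ℝ) ≤ a • x + b • y :=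
    add_nonneg (smul_nonneg ha hx) (smul_nonneg hb hy)
  refine IsGreatestClearingPayment.le_of_le_clearingMap hL
    (isGreatestClearingPayment_clearingVector hL hz)
    (add_nonneg (smul_nonneg ha hcx_nonneg) (smul_nonneg hb hcy_nonneg)) ?_
  conv_lhs => rw [← hcx_fix.eq, ← hcy_fix.eq]
  exact smul_add_smul_clearingMap_le ha hb hab _ _ _ _

variable (L) in
lemma continuous_clearingMap_iterate (k : ℕ) :
    Continuous fun x => (clearingMap L x)^[k] (pbar L) := by
  induction k with
  | zero => exact continuous_const
  | succ k ih =>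
    simp only [Function.iterate_succ_apply']
    exact (continuous_clearingMap L).comp (continuous_id.prodMk ih)

lemma clearingVector_apply (x : Fin n → ℝ) (i : Fin n) :
    clearingVector L x i = ⨅ k, (clearingMap L x)^[k] (pbar L) i :=
  iInf_apply

lemma upperSemicontinuousOn_clearingVector_apply (hL : ∀ i j, 0 ≤ L i j) (i : Fin n) :
    UpperSemicontinuousOn (fun x => clearingVector L x i) (Set.Ici 0) := by
  simp only [clearingVector_apply]
  refine upperSemicontinuousOn_ciInf (fun x hx => ⟨0, ?_⟩) fun k =>
    ((continuous_apply i).comp (continuous_clearingMap_iterate L k)).upperSemicontinuous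
      |>.upperSemicontinuousOn _
  rintro _ ⟨k, rfl⟩
  exact Function.Iterate.rec (0 ≤ ·) (pbar_nonneg hL) (fun _ => clearingMap_nonneg hL hx) k i

variable (L) in
lemma measurable_clearingVector : Measurable (clearingVector L) :=
  measurable_pi_lambda _ fun i => by
    simp only [clearingVector_apply]
    exact Measurable.iInf fun k =>
      ((continuous_apply i).comp (continuous_clearingMap_iterate L k)).measurable

section

variable {Ω : Type*} {m mΩ : MeasurableSpace Ω} {μ : Measure Ω}

lemma integrable_clearingVector_comp [IsFiniteMeasure μ] (hL : ∀ i j, 0 ≤ L i j)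
    {Z : Ω → Fin n → ℝ} (hZ : AEMeasurable Z μ) (hZ0 : ∀ᵐ ω ∂μ, 0 ≤ Z ω) (i : Fin n) :
    Integrable (fun ω => clearingVector L (Z ω) i) μ := by
  refine (integrable_const (pbar L i)).mono'
    ((measurable_clearingVector L).eval.comp_aemeasurable hZ).aestronglyMeasurable ?_
  filter_upwards [hZ0] with ω hω
  obtain ⟨hnonneg, hle⟩ := (isGreatestClearingPayment_clearingVector hL hω).1.1 i
  rwa [Real.norm_of_nonneg hnonneg]

lemma integral_clearingVector_le_condExp [IsFiniteMeasure μ] (hL : ∀ i j, 0 ≤ L i j)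
    (hm : m ≤ mΩ) {X : Ω → Fin n → ℝ} (hX : Integrable X μ) (hX0 : ∀ᵐ ω ∂μ, 0 ≤ X ω)
    (i : Fin n) :
    ∫ ω, clearingVector L (X ω) i ∂μ ≤ ∫ ω, clearingVector L (μ[X | m] ω) i ∂μ := by
  have hconcave : ConcaveOn ℝ (Set.Ici 0) fun x => clearingVector L x i :=
    ⟨convex_Ici 0, fun x hx y hy a b ha hb hab =>
      (concaveOn_clearingVector hL).2 hx hy ha hb hab i⟩
  have hjensen := hconcave.condExp_map_le hm (upperSemicontinuousOn_clearingVector_apply hL i)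
    hX0 isClosed_Ici hX (integrable_clearingVector_comp hL hX.aemeasurable hX0 i)
  calc ∫ ω, clearingVector L (X ω) i ∂μ
      = ∫ ω, μ[fun ω => clearingVector L (X ω) i | m] ω ∂μ := (integral_condExp hm).symm
    _ ≤ ∫ ω, clearingVector L (μ[X | m] ω) i ∂μ :=
      integral_mono_ae integrable_condExp (integrable_clearingVector_comp hL
        integrable_condExp.aemeasurable (condExp_nonneg hX0) i) hjensen

end

end EisenbergNoe

open EisenbergNoe in
theorem conditional_jensen_upper_bound_general (n : ℕ)
    (L : Matrix (Fin n) (Fin (n + 1)) ℝ)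
    (hL : ∀ i j, 0 ≤ L i j)
    (P : (Fin n → ℝ) → (Fin n → ℝ))
    (hP : ∀ x : Fin n → ℝ, (∀ i, 0 ≤ x i) → IsGreatestClearingPayment L x (P x))
    (Ω : Type) (mΩ : MeasurableSpace Ω) (ℙ : Measure Ω) (hprob : IsProbabilityMeasure ℙ)
    (X : Ω → Fin n → ℝ) (hXpos : ∀ ω i, 0 ≤ X ω i)
    (hXint : ∀ i, Integrable (fun ω => X ω i) ℙ)
    (U : Ω → ℝ) (hUm : Measurable U)
    (Y : Ω → Fin n → ℝ)
    (hY : ∀ i, (fun ω => Y ω i)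
      = MeasureTheory.condExp (MeasurableSpace.comap U (borel ℝ)) ℙ (fun ω => X ω i)) :
    ∀ i : Fin n,
      (∫ ω, (X ω i + (∑ j, relLiab L j i * P (X ω) j) - pbar L i) ∂ℙ
        ≤ ∫ ω, (Y ω i + (∑ j, relLiab L j i * P (Y ω) j) - pbar L i) ∂ℙ)
      ∧ (∫ ω, P (X ω) i ∂ℙ ≤ ∫ ω, P (Y ω) i ∂ℙ) := by
  set m := MeasurableSpace.comap U (borel ℝ)
  have hm : m ≤ mΩ := hUm.comap_le
  have hX : Integrable X ℙ := Integrable.of_eval hXint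
  have hX0 : ∀ᵐ ω ∂ℙ, 0 ≤ X ω := ae_of_all _ hXpos
  have hYX : Y =ᵐ[ℙ] ℙ[X | m] := ae_eq_condExp_of_forall_eval_eq hX hY
  have hPX : ∀ ω, P (X ω) = clearingVector L (X ω) := fun ω =>
    (hP _ (hXpos ω)).eq_clearingVector hL (hXpos ω)
  have hPY : ∀ᵐ ω ∂ℙ, P (Y ω) = clearingVector L (ℙ[X | m] ω) := by
    filter_upwards [hYX, condExp_nonneg hX0] with ω hωX hω0
    rw [hωX]
    exact (hP _ hω0).eq_clearingVector hL hω0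
  have hPXint : ∀ j, Integrable (fun ω => P (X ω) j) ℙ := fun j => by
    simpa only [hPX] using integrable_clearingVector_comp hL hX.aemeasurable hX0 j
  have hPYint : ∀ j, Integrable (fun ω => P (Y ω) j) ℙ := fun j =>
    (integrable_clearingVector_comp hL integrable_condExp.aemeasurable (condExp_nonneg hX0) j).congr
      (by filter_upwards [hPY] with ω hω using congrFun hω.symm j)
  have hpayment : ∀ j, ∫ ω, P (X ω) j ∂ℙ ≤ ∫ ω, P (Y ω) j ∂ℙ := fun j => by
    simp only [hPX]
    refine (integral_clearingVector_le_condExp hL hm hX hX0 j).trans_eq (integral_congr_ae ?_)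
    filter_upwards [hPY] with ω hω using congrFun hω.symm j
  have hmean : ∀ i, ∫ ω, X ω i ∂ℙ = ∫ ω, Y ω i ∂ℙ := fun i => by
    rw [hY i, integral_condExp hm]
  exact fun i => ⟨integral_add_sum_mul_sub_le _ (hXint i) (hY i ▸ integrable_condExp) hPXint
    hPYint (hmean i) hpayment fun j => relLiab_nonneg hL j i, hpayment i⟩

/-- In the Eisenberg–Noe setting under the regularity assumption, let `X` be an integrable
random endowment vector and `U` uniform on `[0,1]` such that `𝔼[X | σ(U)]` is almost surely a
nondecreasing function of `U` in every component (comonotonic).  Then for every bank `i`: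
`𝔼[V_i(X)] ≤ 𝔼[V_i(𝔼[X|σ(U)])]` and `𝔼[p_i(X)] ≤ 𝔼[p_i(𝔼[X|σ(U)])]`. -/
theorem conditional_jensen_upper_bound (n : ℕ) (hn : 1 ≤ n)
    (L : Matrix (Fin n) (Fin (n + 1)) ℝ)
    (hL : ∀ i j, 0 ≤ L i j) (hLdiag : ∀ i : Fin n, L i i.castSucc = 0)
    (hreg : ∀ i, 0 < pbar L i ∧ ∑ j, relLiab L i j < 1)
    (P : (Fin n → ℝ) → (Fin n → ℝ))
    (hP : ∀ x : Fin n → ℝ, (∀ i, 0 ≤ x i) → IsGreatestClearingPayment L x (P x))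
    (Ω : Type) (mΩ : MeasurableSpace Ω) (ℙ : Measure Ω) (hprob : IsProbabilityMeasure ℙ)
    (X : Ω → Fin n → ℝ) (hXm : Measurable X) (hXpos : ∀ ω i, 0 ≤ X ω i)
    (hXint : ∀ i, Integrable (fun ω => X ω i) ℙ)
    (U : Ω → ℝ) (hUm : Measurable U)
    (hU : ℙ.map U = volume.restrict (Set.Icc (0 : ℝ) 1))
    (Y : Ω → Fin n → ℝ)
    (hY : ∀ i, (fun ω => Y ω i)
      = MeasureTheory.condExp (MeasurableSpace.comap U (borel ℝ)) ℙ (fun ω => X ω i))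
    (hcomon : ∃ g : ℝ → Fin n → ℝ,
      (∀ i, MonotoneOn (fun u => g u i) (Set.Icc (0 : ℝ) 1))
      ∧ ∀ᵐ ω ∂ℙ, Y ω = g (U ω)) :
    ∀ i : Fin n,
      (∫ ω, (X ω i + (∑ j, relLiab L j i * P (X ω) j) - pbar L i) ∂ℙ
        ≤ ∫ ω, (Y ω i + (∑ j, relLiab L j i * P (Y ω) j) - pbar L i) ∂ℙ)
      ∧ (∫ ω, P (X ω) i ∂ℙ ≤ ∫ ω, P (Y ω) i ∂ℙ) :=
  conditional_jensen_upper_bound_general n L hL P hP Ω mΩ ℙ hprob X hXpos hXint U hUm Y hY
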